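/- arXiv:1308.2358 — 2 statements merged into one kernel-verified Lean document; each statement's English description precedes it below -/
import Mathlib

section
/- For all positive integers n, b and every integer ℓ with 0 ≤ ℓ < n, one has c_{n,b}(ℓ) ≤ c_{n,b}(ℓ+1); that is, the initial segment c_{n,b}(0) ≤ c_{n,b}(1) ≤ ... ≤ c_{n,b}(n) is weakly increasing. -/
/-- `c n b ℓ` is the number of partitions of `ℓ` into at most `b` distinct parts,
each part of size at most `n`, encoded as finsets of `{1, …, n}` of cardinality
at most `b` with sum `ℓ`. -/
def truncStaircaseCount (n b ℓ : ℕ) : ℕ :=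
  (((Finset.Icc 1 n).powerset).filter (fun s => s.card ≤ b ∧ s.sum id = ℓ)).card

/-!
Raising the largest part of a partition into distinct parts by one (and sending the empty
partition to `{1}`) keeps the parts distinct, raises the sum by one and is injective, since the
largest part of the image is one more than that of the original. The largest part is at most the
sum `ℓ < n`, so the raised part still lies in `{1, …, n}`.
-/

namespace Finset

/-- `s.sup id` is `0` for `s = ∅`, so `bumpMax ∅ = bumpMax {0} = {1}`. -/
def bumpMax (s : Finset ℕ) : Finset ℕ :=
  insert (s.sup id + 1) (s.erase (s.sup id))

variable {s : Finset ℕ}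

lemma sup_id_succ_notMem (s : Finset ℕ) : s.sup id + 1 ∉ s := fun h =>
  (Nat.lt_succ_self _).not_ge (le_sup (f := id) h)

lemma sup_id_succ_notMem_erase (s : Finset ℕ) : s.sup id + 1 ∉ s.erase (s.sup id) :=
  fun h => sup_id_succ_notMem s (mem_of_mem_erase h)

lemma sup_id_le_sum_id (s : Finset ℕ) : s.sup id ≤ s.sum id :=
  Finset.sup_le fun _ hi => single_le_sum_of_canonicallyOrdered hi

lemma sup_id_mem (hs : s.Nonempty) : s.sup id ∈ s := by
  obtain ⟨i, hi, hsup⟩ := exists_mem_eq_sup s hs id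
  exact hsup ▸ hi

lemma sum_erase_sup_id_add (s : Finset ℕ) :
    (s.erase (s.sup id)).sum id + s.sup id = s.sum id := by
  rcases s.eq_empty_or_nonempty with rfl | hs
  · simp
  · exact sum_erase_add s id (sup_id_mem hs)

lemma sum_id_bumpMax (s : Finset ℕ) : (bumpMax s).sum id = s.sum id + 1 := by
  rw [bumpMax, sum_insert (sup_id_succ_notMem_erase s),
    ← sum_erase_sup_id_add s]
  simp only [id_eq]
  omega

lemma card_bumpMax (s : Finset ℕ) : (bumpMax s).card = max s.card 1 := by
  rw [bumpMax, card_insert_of_notMem (sup_id_succ_notMem_erase s)]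
  rcases s.eq_empty_or_nonempty with rfl | hs
  · simp
  · rw [card_erase_of_mem (sup_id_mem hs)]
    have := hs.card_pos
    omega

lemma sup_id_bumpMax (s : Finset ℕ) : (bumpMax s).sup id = s.sup id + 1 := by
  rw [bumpMax, sup_insert]
  exact sup_eq_left.mpr ((sup_mono (erase_subset _ s)).trans (Nat.le_succ _))

lemma erase_bumpMax (s : Finset ℕ) :
    (bumpMax s).erase (s.sup id + 1) = s.erase (s.sup id) :=
  erase_insert (sup_id_succ_notMem_erase s)

lemma sup_id_mem_iff (h0 : 0 ∉ s) : s.sup id ∈ s ↔ s.sup id ≠ 0 := by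
  refine ⟨fun h hzero => h0 (hzero ▸ h), fun hne => ?_⟩
  rcases s.eq_empty_or_nonempty with rfl | hs
  · simp at hne
  · exact sup_id_mem hs

lemma bumpMax_injOn : Set.InjOn bumpMax {s | 0 ∉ s} := by
  intro s hs t ht hst
  have hsup : s.sup id = t.sup id := by
    simpa only [sup_id_bumpMax, Nat.succ_inj] using congrArg (sup · id) hst
  have herase : s.erase (s.sup id) = t.erase (s.sup id) := by
    rw [← erase_bumpMax, hst, hsup, erase_bumpMax]
  have hmem : s.sup id ∈ s ↔ s.sup id ∈ t := by
    rw [sup_id_mem_iff hs, hsup, sup_id_mem_iff ht]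
  ext x
  by_cases hx : x = s.sup id
  · exact hx ▸ hmem
  · simpa [hx] using congrArg (x ∈ ·) herase

lemma bumpMax_subset_Icc {n : ℕ} (hs : s ⊆ Icc 1 n) (hlt : s.sup id < n) :
    bumpMax s ⊆ Icc 1 n :=
  insert_subset (mem_Icc.mpr ⟨Nat.le_add_left 1 _, hlt⟩) ((erase_subset _ s).trans hs)

end Finset

open Finset in
theorem initial_segment_increasing_general (n b ℓ : ℕ) (hb : 0 < b) (hℓ : ℓ < n) :
    truncStaircaseCount n b ℓ ≤ truncStaircaseCount n b (ℓ + 1) := by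
  refine card_le_card_of_injOn bumpMax (fun s hs => ?_) (bumpMax_injOn.mono fun s hs => ?_)
  · simp only [coe_filter, mem_powerset, Set.mem_ofPred_eq] at hs ⊢
    obtain ⟨hsub, hcard, hsum⟩ := hs
    refine ⟨bumpMax_subset_Icc hsub ?_, ?_, ?_⟩
    · exact (sup_id_le_sum_id s).trans_lt (hsum ▸ hℓ)
    · rw [card_bumpMax]
      exact max_le hcard hb
    · rw [sum_id_bumpMax, hsum]
  · simp only [coe_filter, mem_powerset, Set.mem_ofPred_eq] at hs ⊢
    exact fun h0 => by simpa using hs.1 h0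

/-- For `0 ≤ ℓ < n`, `c_{n,b}(ℓ) ≤ c_{n,b}(ℓ+1)`: the initial segment is weakly increasing. -/
theorem initial_segment_increasing (n b ℓ : ℕ) (hn : 0 < n) (hb : 0 < b) (hℓ : ℓ < n) :
    truncStaircaseCount n b ℓ ≤ truncStaircaseCount n b (ℓ + 1) :=
  initial_segment_increasing_general n b ℓ hb hℓ
end

section
/- For all positive integers n, b with n ≥ b and every integer ℓ with (b−1)n < ℓ ≤ bn − b(b−1)/2, one has c_{n,b}(ℓ−1) ≥ c_{n,b}(ℓ); that is, the final segment c_{n,b}((b−1)n) ≥ c_{n,b}((b−1)n + 1) ≥ ... ≥ c_{n,b}(bn − b(b−1)/2) is weakly decreasing. -/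
namespace Finset

theorem erase_injOn_card_eq {α : Type*} [DecidableEq α] (a : α) (k : ℕ) :
    Set.InjOn (fun s : Finset α => s.erase a) {s | s.card = k} := by
  intro s (hs : s.card = k) t (ht : t.card = k) (hst : s.erase a = t.erase a)
  by_cases has : a ∈ s <;> by_cases hat : a ∈ t
  · exact erase_injOn' a has hat hst
  · have := congrArg card hst
    rw [card_erase_of_mem has, erase_eq_of_notMem hat] at this
    have := card_pos.mpr ⟨a, has⟩
    omega
  · have := congrArg card hst
    rw [card_erase_of_mem hat, erase_eq_of_notMem has] at this
    have := card_pos.mpr ⟨a, hat⟩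
    omega
  · rwa [erase_eq_of_notMem has, erase_eq_of_notMem hat] at hst

theorem card_eq_of_mul_lt_sum {s : Finset ℕ} {n b : ℕ} (hs : s ⊆ Icc 1 n) (hcard : s.card ≤ b)
    (hsum : (b - 1) * n < s.sum id) : s.card = b := by
  by_contra hne
  have hle : s.sum id ≤ s.card * n := by
    simpa using sum_le_card_nsmul s id n fun x hx => (mem_Icc.mp (hs hx)).2
  have : s.card * n ≤ (b - 1) * n := Nat.mul_le_mul_right n (by omega)
  omega

def lowerMin (s : Finset ℕ) : Finset ℕ :=
  if h : s.Nonempty then insert (s.min' h - 1) (s.erase (s.min' h)) else ∅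

variable {s : Finset ℕ}

theorem min'_pos_of_zero_notMem (h : s.Nonempty) (h0 : 0 ∉ s) : 0 < s.min' h :=
  Nat.pos_of_ne_zero fun h' => h0 (h' ▸ min'_mem s h)

theorem lowerMin_of_nonempty (h : s.Nonempty) :
    lowerMin s = insert (s.min' h - 1) (s.erase (s.min' h)) :=
  dif_pos h

theorem min'_sub_one_notMem_erase (h : s.Nonempty) : s.min' h - 1 ∉ s.erase (s.min' h) :=
  fun hmem => by have := min'_lt_of_mem_erase_min' s h hmem; omega

theorem card_lowerMin (h : s.Nonempty) : (lowerMin s).card = s.card := by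
  rw [lowerMin_of_nonempty h, card_insert_of_notMem (min'_sub_one_notMem_erase h),
    card_erase_add_one (min'_mem s h)]

theorem sum_lowerMin_add_one (h : s.Nonempty) (h0 : 0 ∉ s) :
    (lowerMin s).sum id + 1 = s.sum id := by
  have := min'_pos_of_zero_notMem h h0
  rw [lowerMin_of_nonempty h, sum_insert (min'_sub_one_notMem_erase h),
    ← sum_erase_add s id (min'_mem s h), id, id]
  omega

theorem min'_lowerMin (h : s.Nonempty) (h' : (lowerMin s).Nonempty) :
    (lowerMin s).min' h' = s.min' h - 1 := by
  refine le_antisymm (min'_le _ _ ?_) (le_min' _ _ _ fun x hx => ?_)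
  · rw [lowerMin_of_nonempty h]
    exact mem_insert_self _ _
  · rw [lowerMin_of_nonempty h, mem_insert] at hx
    rcases hx with rfl | hx
    · rfl
    · have := min'_lt_of_mem_erase_min' s h hx
      omega

theorem lowerMin_injOn : Set.InjOn lowerMin {s | s.Nonempty ∧ 0 ∉ s} := by
  rintro s ⟨hs, hs0⟩ t ⟨ht, ht0⟩ hst
  have hne : (lowerMin s).Nonempty := by
    rw [← card_pos, card_lowerMin hs]
    exact card_pos.mpr hs
  have hmin : s.min' hs = t.min' ht := by
    have : (lowerMin s).min' hne = (lowerMin t).min' (hst ▸ hne) := by congr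
    rw [min'_lowerMin hs hne, min'_lowerMin ht] at this
    have := min'_pos_of_zero_notMem hs hs0
    have := min'_pos_of_zero_notMem ht ht0
    omega
  have herase : s.erase (s.min' hs) = t.erase (s.min' hs) := by
    have := congrArg (·.erase (s.min' hs - 1)) hst
    simp only [lowerMin_of_nonempty hs, lowerMin_of_nonempty ht, ← hmin] at this
    rwa [erase_insert (min'_sub_one_notMem_erase hs),
      erase_insert (hmin ▸ min'_sub_one_notMem_erase ht)] at this
  rw [← insert_erase (min'_mem s hs), ← insert_erase (min'_mem t ht), ← hmin, herase]

theorem erase_zero_lowerMin_subset_Icc {n : ℕ} (hs : s ⊆ Icc 1 n) :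
    (lowerMin s).erase 0 ⊆ Icc 1 n := by
  intro x hx
  obtain ⟨hx0, hx⟩ := mem_erase.mp hx
  rcases s.eq_empty_or_nonempty with rfl | h
  · simp [lowerMin] at hx
  rw [lowerMin_of_nonempty h, mem_insert] at hx
  rcases hx with rfl | hx
  · have := (mem_Icc.mp (hs (min'_mem s h))).2
    exact mem_Icc.mpr ⟨by omega, by omega⟩
  · exact hs (mem_of_mem_erase hx)

end Finset

open Finset in
theorem final_segment_decreasing_general (n b ℓ : ℕ)
    (h₁ : (b - 1) * n < ℓ) :
    truncStaircaseCount n b ℓ ≤ truncStaircaseCount n b (ℓ - 1) := by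
  unfold truncStaircaseCount
  have source : ∀ s ∈ (Icc 1 n).powerset.filter (fun s => s.card ≤ b ∧ s.sum id = ℓ),
      s ⊆ Icc 1 n ∧ s.Nonempty ∧ 0 ∉ s ∧ (lowerMin s).card = b ∧ s.sum id = ℓ := by
    intro s hs
    obtain ⟨hsub, hcard, hsum⟩ := by simpa only [mem_filter, mem_powerset] using hs
    have hne : s.Nonempty := nonempty_of_ne_empty fun h => by simp [h] at hsum; omega
    refine ⟨hsub, hne, fun h0 => by simpa using hsub h0, ?_, hsum⟩
    rw [card_lowerMin hne, card_eq_of_mul_lt_sum hsub hcard (hsum ▸ h₁)]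
  refine card_le_card_of_injOn (fun s => (lowerMin s).erase 0) (fun s hs => ?_) ?_
  · obtain ⟨hsub, hne, h0, hcard, hsum⟩ := source s hs
    have := sum_lowerMin_add_one hne h0
    simp only [mem_coe, mem_filter, mem_powerset]
    refine ⟨erase_zero_lowerMin_subset_Icc hsub, (card_erase_le).trans hcard.le, ?_⟩
    rw [sum_erase (f := id) _ rfl]
    exact Nat.eq_sub_of_add_eq (this.trans hsum)
  · intro s hs t ht hst
    obtain ⟨-, hs, hs0, hcs, -⟩ := source s hs
    obtain ⟨-, ht, ht0, hct, -⟩ := source t ht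
    exact lowerMin_injOn ⟨hs, hs0⟩ ⟨ht, ht0⟩ (erase_injOn_card_eq 0 b hcs hct hst)

/-- For `n ≥ b ≥ 1` and `(b−1)n < ℓ ≤ bn − b(b−1)/2`, one has
`c_{n,b}(ℓ−1) ≥ c_{n,b}(ℓ)`: the final segment is weakly decreasing. -/
theorem final_segment_decreasing (n b ℓ : ℕ) (hb : 0 < b) (hnb : b ≤ n)
    (h₁ : (b - 1) * n < ℓ) (h₂ : ℓ ≤ b * n - b * (b - 1) / 2) :
    truncStaircaseCount n b ℓ ≤ truncStaircaseCount n b (ℓ - 1) :=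
  final_segment_decreasing_general n b ℓ h₁
end
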